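/- arXiv:1907.12351 — 9 statements merged into one kernel-verified Lean document; each statement's English description precedes it below -/
import Mathlib

section
/- The equation (x - y)^4 + x^4 + (x + y)^4 = z^2 has no integer solutions x, y, z with gcd(x, y) = 1. -/
/-!
Reduce modulo 5. The left-hand side equals `3x⁴ + 12x²y² + 2y⁴`, and fourth powers modulo 5 are
`0` or `1`; if `x` and `y` are not both divisible by 5 this gives `2` or `3` modulo 5, neither of
which is a square modulo 5.
-/

lemma ZMod.intCast_ne_zero_or_of_gcd_eq_one {n : ℕ} (hn : n ≠ 1) {x y : ℤ} (h : Int.gcd x y = 1) :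
    (x : ZMod n) ≠ 0 ∨ (y : ZMod n) ≠ 0 := by
  by_contra! hxy
  simp only [ZMod.intCast_zmod_eq_zero_iff_dvd] at hxy
  have hn_dvd : (n : ℤ) ∣ 1 := by simpa [h] using Int.dvd_coe_gcd hxy.1 hxy.2
  exact hn (by exact_mod_cast Int.eq_one_of_dvd_one (by positivity) hn_dvd)

lemma ZMod.five_sum_fourth_powers_ne_sq :
    ∀ a b c : ZMod 5, (a ≠ 0 ∨ b ≠ 0) → (a - b) ^ 4 + a ^ 4 + (a + b) ^ 4 ≠ c ^ 2 := by
  decide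

theorem stmt_0 :
    ¬ ∃ x y z : ℤ, Int.gcd x y = 1 ∧ (x - y) ^ 4 + x ^ 4 + (x + y) ^ 4 = z ^ 2 := by
  rintro ⟨x, y, z, hxy, h⟩
  refine ZMod.five_sum_fourth_powers_ne_sq x y z
    (ZMod.intCast_ne_zero_or_of_gcd_eq_one (by norm_num) hxy) ?_
  exact_mod_cast congrArg (Int.cast : ℤ → ZMod 5) h
end

section
/- If a, b, c are integers with gcd(a, b) = 1 and l > 1 is an integer such that (a - b)^4 + a^4 + (a + b)^4 = c^l, then c is not divisible by 2, 3, or 5; in particular a is odd and 3 does not divide b. -/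
/-!
Write `S(a, b) = (a - b)^4 + a^4 + (a + b)^4 = 3a^4 + 12a^2b^2 + 2b^4`. Modulo 2, 3 and 5 one
checks that `2 ∣ S ↔ 2 ∣ a`, `3 ∣ S ↔ 3 ∣ b`, and `5 ∣ S` only when `5 ∣ a` and `5 ∣ b`.
For coprime `a, b` this rules out `5 ∣ S`, and also `4 ∣ S` (if `a = 2x` then `S ≡ 2b^4 mod 4`)
and `9 ∣ S` (if `b = 3y` then `S ≡ 3a^4 mod 9`). An `l`-th power with `l > 1` divisible by `p`
is divisible by `p^2`, so none of 2, 3, 5 divides `c`; then `2 ∤ S` and `3 ∤ S` give `a` odd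
and `3 ∤ b`.
-/

def sumFourthPowersAP {R : Type*} [CommRing R] (a b : R) : R :=
  (a - b) ^ 4 + a ^ 4 + (a + b) ^ 4

namespace sumFourthPowersAP

variable {a b : ℤ}

theorem intCast {R : Type*} [CommRing R] (a b : ℤ) :
    ((sumFourthPowersAP a b : ℤ) : R) = sumFourthPowersAP (a : R) (b : R) := by
  simp [sumFourthPowersAP]

theorem dvd_iff_zmod (p : ℕ) (a b : ℤ) :
    (p : ℤ) ∣ sumFourthPowersAP a b ↔ sumFourthPowersAP (a : ZMod p) (b : ZMod p) = 0 := by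
  rw [← ZMod.intCast_zmod_eq_zero_iff_dvd, intCast]

theorem two_dvd_iff : 2 ∣ sumFourthPowersAP a b ↔ 2 ∣ a := by
  have key : ∀ u v : ZMod 2, sumFourthPowersAP u v = 0 ↔ u = 0 := by decide
  rw [← Nat.cast_ofNat, dvd_iff_zmod, ← ZMod.intCast_zmod_eq_zero_iff_dvd]
  exact key _ _

theorem three_dvd_iff : 3 ∣ sumFourthPowersAP a b ↔ 3 ∣ b := by
  have key : ∀ u v : ZMod 3, sumFourthPowersAP u v = 0 ↔ v = 0 := by decide
  rw [← Nat.cast_ofNat, dvd_iff_zmod, ← ZMod.intCast_zmod_eq_zero_iff_dvd]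
  exact key _ _

theorem dvd_of_five_dvd (h : 5 ∣ sumFourthPowersAP a b) : 5 ∣ a ∧ 5 ∣ b := by
  have key : ∀ u v : ZMod 5, sumFourthPowersAP u v = 0 → u = 0 ∧ v = 0 := by decide
  rw [← Nat.cast_ofNat, dvd_iff_zmod] at h
  simpa only [ZMod.intCast_zmod_eq_zero_iff_dvd, Nat.cast_ofNat] using key _ _ h

theorem two_dvd_of_four_dvd (ha : 2 ∣ a) (h : 4 ∣ sumFourthPowersAP a b) : 2 ∣ b := by
  obtain ⟨x, rfl⟩ := ha
  have hS : sumFourthPowersAP (2 * x) b = 2 * b ^ 4 + 4 * (12 * x ^ 4 + 12 * x ^ 2 * b ^ 2) := by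
    simp only [sumFourthPowersAP]; ring
  rw [hS, dvd_add_left (dvd_mul_right 4 _), show (4 : ℤ) = 2 * 2 by norm_num,
    mul_dvd_mul_iff_left two_ne_zero] at h
  exact Int.prime_two.dvd_of_dvd_pow h

theorem three_dvd_of_nine_dvd (hb : 3 ∣ b) (h : 9 ∣ sumFourthPowersAP a b) : 3 ∣ a := by
  obtain ⟨y, rfl⟩ := hb
  have hS : sumFourthPowersAP a (3 * y) = 3 * a ^ 4 + 9 * (12 * a ^ 2 * y ^ 2 + 18 * y ^ 4) := by
    simp only [sumFourthPowersAP]; ring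
  rw [hS, dvd_add_left (dvd_mul_right 9 _), show (9 : ℤ) = 3 * 3 by norm_num,
    mul_dvd_mul_iff_left three_ne_zero] at h
  exact Int.prime_three.dvd_of_dvd_pow h

theorem not_four_dvd (hab : IsCoprime a b) : ¬ 4 ∣ sumFourthPowersAP a b := fun h4 => by
  have ha : 2 ∣ a := two_dvd_iff.mp ((show (2 : ℤ) ∣ 4 by norm_num).trans h4)
  exact Int.prime_two.not_isUnit (hab.isUnit_of_dvd' ha (two_dvd_of_four_dvd ha h4))

theorem not_nine_dvd (hab : IsCoprime a b) : ¬ 9 ∣ sumFourthPowersAP a b := fun h9 => by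
  have hb : 3 ∣ b := three_dvd_iff.mp ((show (3 : ℤ) ∣ 9 by norm_num).trans h9)
  exact Int.prime_three.not_isUnit (hab.isUnit_of_dvd' (three_dvd_of_nine_dvd hb h9) hb)

theorem not_five_dvd (hab : IsCoprime a b) : ¬ 5 ∣ sumFourthPowersAP a b := fun h5 => by
  obtain ⟨ha, hb⟩ := dvd_of_five_dvd h5
  exact (by norm_num [Int.isUnit_iff] : ¬ IsUnit (5 : ℤ)) (hab.isUnit_of_dvd' ha hb)

end sumFourthPowersAP

open sumFourthPowersAP in
theorem stmt_2 (a b c : ℤ) (l : ℕ) (hl : 1 < l) (hab : Int.gcd a b = 1)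
    (h : (a - b) ^ 4 + a ^ 4 + (a + b) ^ 4 = c ^ l) :
    ¬ (2 ∣ c) ∧ ¬ (3 ∣ c) ∧ ¬ (5 ∣ c) ∧ Odd a ∧ ¬ ((3 : ℤ) ∣ b) := by
  have hcop : IsCoprime a b := Int.isCoprime_iff_gcd_eq_one.mpr hab
  have hS : sumFourthPowersAP a b = c ^ l := h
  have sq_dvd {p : ℤ} (hp : p ∣ c) : p ^ 2 ∣ sumFourthPowersAP a b :=
    hS ▸ (pow_dvd_pow_of_dvd hp 2).trans (pow_dvd_pow c hl)
  have hc2 : ¬ 2 ∣ c := fun hc => not_four_dvd hcop (by simpa using sq_dvd hc)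
  have hc3 : ¬ 3 ∣ c := fun hc => not_nine_dvd hcop (by simpa using sq_dvd hc)
  have hc5 : ¬ 5 ∣ c := fun hc =>
    not_five_dvd hcop ((show (5 : ℤ) ∣ 5 ^ 2 by norm_num).trans (sq_dvd hc))
  refine ⟨hc2, hc3, hc5, ?_, ?_⟩
  · rw [← Int.not_even_iff_odd, even_iff_two_dvd, ← two_dvd_iff, hS]
    exact fun h2 => hc2 (Int.prime_two.dvd_of_dvd_pow h2)
  · rw [← three_dvd_iff, hS]
    exact fun h3 => hc3 (Int.prime_three.dvd_of_dvd_pow h3)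
end

section
/- There are no integers a, b, c with gcd(a,b) = 1 and c^l = 3a^4 + 12a^2b^2 + 2b^4 for any integer l > 1 such that 3 divides c. -/
/-! Since `3 ∣ c` and `l ≥ 2`, the right-hand side is divisible by `9`. Modulo `3` it reduces to
`2 b⁴`, so `3 ∣ b`; then every term but `3 a⁴` is divisible by `9`, so `3 ∣ a⁴` and `3 ∣ a`,
contradicting `gcd(a, b) = 1`. -/

lemma three_dvd_of_nine_dvd_quartic {a b : ℤ}
    (h : 9 ∣ 3 * a ^ 4 + 12 * a ^ 2 * b ^ 2 + 2 * b ^ 4) : 3 ∣ a ∧ 3 ∣ b := by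
  have hb : 3 ∣ b := by
    have h3 : (3 : ℤ) ∣ 3 * (a ^ 4 + 4 * a ^ 2 * b ^ 2) + 2 * b ^ 4 := by
      rw [show 3 * (a ^ 4 + 4 * a ^ 2 * b ^ 2) + 2 * b ^ 4
          = 3 * a ^ 4 + 12 * a ^ 2 * b ^ 2 + 2 * b ^ 4 by ring]
      exact (show (3 : ℤ) ∣ 9 by norm_num).trans h
    have h2b : (3 : ℤ) ∣ 2 * b ^ 4 := (dvd_add_right (dvd_mul_right _ _)).mp h3
    exact Int.prime_three.dvd_of_dvd_pow
      ((Int.prime_three.dvd_or_dvd h2b).resolve_left (by norm_num))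
  obtain ⟨k, rfl⟩ := hb
  have h9 : (9 : ℤ) ∣ 3 * a ^ 4 + 9 * (12 * a ^ 2 * k ^ 2 + 18 * k ^ 4) := by
    rw [show 3 * a ^ 4 + 9 * (12 * a ^ 2 * k ^ 2 + 18 * k ^ 4)
        = 3 * a ^ 4 + 12 * a ^ 2 * (3 * k) ^ 2 + 2 * (3 * k) ^ 4 by ring]
    exact h
  have ha : (3 : ℤ) * 3 ∣ 3 * a ^ 4 := (dvd_add_left (dvd_mul_right _ _)).mp h9
  exact ⟨Int.prime_three.dvd_of_dvd_pow ((mul_dvd_mul_iff_left three_ne_zero).mp ha),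
    dvd_mul_right _ _⟩

theorem stmt_3 :
    ¬ ∃ (a b c : ℤ) (l : ℕ), 1 < l ∧ Int.gcd a b = 1 ∧
      c ^ l = 3 * a ^ 4 + 12 * a ^ 2 * b ^ 2 + 2 * b ^ 4 ∧ 3 ∣ c := by
  rintro ⟨a, b, c, l, hl, hgcd, heq, hc⟩
  have h9 : (9 : ℤ) ∣ c ^ l := (pow_dvd_pow_of_dvd hc 2).trans (pow_dvd_pow c hl)
  obtain ⟨ha, hb⟩ := three_dvd_of_nine_dvd_quartic (heq ▸ h9)
  have h3 : (3 : ℤ) ∣ (Int.gcd a b : ℤ) := Int.dvd_coe_gcd ha hb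
  rw [hgcd] at h3
  norm_num at h3
end

section
/- There are no integers a, b, c with gcd(a,b) = 1 and c^l = 3a^4 + 12a^2b^2 + 2b^4 for any integer l > 1 such that 5 divides c. -/
/-! Modulo 5 fourth powers are 0 or 1, and one checks that `3x⁴ + 12x²y² + 2y⁴` vanishes in
`ZMod 5` only at `x = y = 0`. So `5 ∣ c` forces `5 ∣ a` and `5 ∣ b`, contradicting `gcd(a, b) = 1`. -/

theorem quartic_form_zmod_five_eq_zero_iff (x y : ZMod 5) :
    3 * x ^ 4 + 12 * x ^ 2 * y ^ 2 + 2 * y ^ 4 = 0 ↔ x = 0 ∧ y = 0 := by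
  revert x y
  decide

theorem five_dvd_of_five_dvd_quartic_form {a b : ℤ}
    (h : 5 ∣ 3 * a ^ 4 + 12 * a ^ 2 * b ^ 2 + 2 * b ^ 4) : 5 ∣ a ∧ 5 ∣ b := by
  have h5 := (ZMod.intCast_zmod_eq_zero_iff_dvd _ 5).2 h
  push_cast at h5
  obtain ⟨ha, hb⟩ := (quartic_form_zmod_five_eq_zero_iff _ _).1 h5
  exact ⟨(ZMod.intCast_zmod_eq_zero_iff_dvd a 5).1 ha,
    (ZMod.intCast_zmod_eq_zero_iff_dvd b 5).1 hb⟩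

theorem stmt_4 :
    ¬ ∃ (a b c : ℤ) (l : ℕ), 1 < l ∧ Int.gcd a b = 1 ∧
      c ^ l = 3 * a ^ 4 + 12 * a ^ 2 * b ^ 2 + 2 * b ^ 4 ∧ 5 ∣ c := by
  rintro ⟨a, b, c, l, hl, hgcd, heq, hc⟩
  have hform : 5 ∣ 3 * a ^ 4 + 12 * a ^ 2 * b ^ 2 + 2 * b ^ 4 :=
    heq ▸ dvd_pow hc (by omega)
  obtain ⟨ha, hb⟩ := five_dvd_of_five_dvd_quartic_form hform
  have h5 : (5 : ℤ) ∣ 1 := by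
    simpa [hgcd] using Int.dvd_coe_gcd ha hb
  norm_num at h5
end

section
/- There are no coprime integers a, b and integers s, t with a² = -3s(23s² + 12st + 2t²), b² = 18s³ + 9s²t - 2t³, and c = 3s² + 12st + 2t² satisfying gcd(c, 10) = 1. -/
/-! Since `c` is odd, so is `s`. The equation for `a²` gives `3 ∣ a`, and then, reducing mod 3,
`3 ∣ s`. Writing `a = 3x`, `s = -3v` turns it into `x² = v·q` with `q = 207v² - 36vt + 2t²` and `v`
odd. Coprimality of `a` and `b` makes `v` and `q` coprime, and `q > 0`, so `q` is a square; but for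
odd `v`, `q ≡ 5` or `7 (mod 8)`. -/

lemma odd_of_gcd_eq_one_of_even {c m : ℤ} (h : Int.gcd c m = 1) (hm : Even m) : Odd c := by
  rw [← Int.isCoprime_two_right]
  exact (Int.isCoprime_iff_gcd_eq_one.mpr h).of_isCoprime_of_dvd_right (even_iff_two_dvd.mp hm)

lemma odd_of_odd_quadForm {s t : ℤ} (h : Odd (3 * s ^ 2 + 12 * s * t + 2 * t ^ 2)) : Odd s := by
  rw [show 3 * s ^ 2 + 12 * s * t + 2 * t ^ 2 = s ^ 2 + 2 * (s ^ 2 + 6 * s * t + t ^ 2) by ring] at h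
  simpa [parity_simps] using h

lemma three_dvd_of_three_mul_sq_eq {x s t : ℤ}
    (h : 3 * x ^ 2 = -s * (23 * s ^ 2 + 12 * s * t + 2 * t ^ 2)) : 3 ∣ s := by
  have hmod := congrArg (fun y : ℤ => (y : ZMod 3)) h
  push_cast at hmod
  refine (ZMod.intCast_zmod_eq_zero_iff_dvd s 3).mp ?_
  revert hmod
  generalize (s : ZMod 3) = S
  generalize (t : ZMod 3) = T
  generalize (x : ZMod 3) = X
  revert S T X
  decide

lemma isCoprime_descentForm {a b v t : ℤ} (hv : Odd v) (hab : IsCoprime a b)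
    (ha : a ^ 2 = v * (207 * v ^ 2 - 36 * v * t + 2 * t ^ 2))
    (hb : b ^ 2 = -486 * v ^ 3 + 81 * v ^ 2 * t - 2 * t ^ 3) :
    IsCoprime v (207 * v ^ 2 - 36 * v * t + 2 * t ^ 2) := by
  have hvb : IsCoprime v (b ^ 2) :=
    (hab.pow (m := 2) (n := 2)).of_isCoprime_of_dvd_left (ha ▸ dvd_mul_right _ _)
  have hvt : IsCoprime v t := by
    rw [hb, show -486 * v ^ 3 + 81 * v ^ 2 * t - 2 * t ^ 3
      = -2 * t ^ 3 + v * (-486 * v ^ 2 + 81 * v * t) by ring,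
      IsCoprime.add_mul_left_right_iff] at hvb
    exact (IsCoprime.pow_right_iff (by norm_num)).mp hvb.of_mul_right_right
  rw [show 207 * v ^ 2 - 36 * v * t + 2 * t ^ 2 = 2 * t ^ 2 + v * (207 * v - 36 * t) by ring,
    IsCoprime.add_mul_left_right_iff]
  exact (Int.isCoprime_two_right.mpr hv).mul_right hvt.pow_right

lemma descentForm_pos {v t : ℤ} (hv : v ≠ 0) : 0 < 207 * v ^ 2 - 36 * v * t + 2 * t ^ 2 := by
  nlinarith [sq_nonneg (t - 9 * v), sq_pos_of_ne_zero hv]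

lemma descentForm_ne_sq {v t n : ℤ} (hv : Odd v) : 207 * v ^ 2 - 36 * v * t + 2 * t ^ 2 ≠ n ^ 2 := by
  obtain ⟨k, rfl⟩ := hv
  intro h
  have hmod := congrArg (fun y : ℤ => (y : ZMod 8)) h
  push_cast at hmod
  revert hmod
  generalize (n : ZMod 8) = N
  generalize (k : ZMod 8) = K
  generalize (t : ZMod 8) = T
  revert N K T
  decide

theorem stmt_11 :
    ¬ ∃ a b s t c : ℤ, Int.gcd a b = 1 ∧
      a ^ 2 = -3 * s * (23 * s ^ 2 + 12 * s * t + 2 * t ^ 2) ∧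
      b ^ 2 = 18 * s ^ 3 + 9 * s ^ 2 * t - 2 * t ^ 3 ∧
      c = 3 * s ^ 2 + 12 * s * t + 2 * t ^ 2 ∧
      Int.gcd c 10 = 1 := by
  rintro ⟨a, b, s, t, c, hab, ha, hb, rfl, hc⟩
  have hs : Odd s := odd_of_odd_quadForm (odd_of_gcd_eq_one_of_even hc (by decide))
  obtain ⟨x, rfl⟩ : 3 ∣ a := Int.prime_three.dvd_of_dvd_pow
    ⟨-s * (23 * s ^ 2 + 12 * s * t + 2 * t ^ 2), by rw [ha]; ring⟩
  have h3s : 3 ∣ s := three_dvd_of_three_mul_sq_eq (x := x) (t := t)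
    (mul_left_cancel₀ three_ne_zero (by linear_combination ha))
  obtain ⟨v, rfl⟩ : ∃ v, s = -3 * v := ⟨-(s / 3), by omega⟩
  have hv : Odd v := (Int.odd_mul.mp hs).2
  have hxv : x ^ 2 = v * (207 * v ^ 2 - 36 * v * t + 2 * t ^ 2) :=
    mul_left_cancel₀ (by norm_num : (9 : ℤ) ≠ 0) (by linear_combination ha)
  have hcop := isCoprime_descentForm hv
    ((Int.isCoprime_iff_gcd_eq_one.mpr hab).of_mul_left_right) hxv (by linear_combination hb)
  obtain ⟨n, hn | hn⟩ := Int.sq_of_isCoprime (c := x) hcop.symm (by linear_combination -hxv)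
  · exact descentForm_ne_sq hv hn
  · nlinarith [descentForm_pos (v := v) (t := t) (by rintro rfl; simp at hv), sq_nonneg n]
end

section
/- The hyperelliptic curve C₂ : Y² = -599940X⁶ - 627237X⁵ - 273132X⁴ - 63276X³ - 8208X² - 564X - 16 has no points over ℚ₃, and hence no rational points. -/
/-! Auxiliary lemmas for the 3-adic analysis of the curve
`C₂ : Y² = -599940X⁶ - 627237X⁵ - 273132X⁴ - 63276X³ - 8208X² - 564X - 16`. -/

private lemma nm3 : ‖(3 : ℚ_[3])‖ = (3:ℝ)⁻¹ := by
  have := @Padic.norm_p 3 ⟨by norm_num⟩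
  simpa using this

private lemma nm_unit (m : ℤ) (hm : ¬ (3:ℤ) ∣ m) : ‖((m:ℤ) : ℚ_[3])‖ = 1 := by
  refine le_antisymm (Padic.norm_int_le_one _) ?_
  by_contra h
  push_neg at h
  rw [Padic.norm_intCast_lt_one_iff] at h
  exact hm (by exact_mod_cast h)

private lemma nm_599940 : ‖((599940:ℤ) : ℚ_[3])‖ = (27:ℝ)⁻¹ := by
  have h : ((599940:ℤ) : ℚ_[3]) = (3:ℚ_[3])^3 * ((22220:ℤ):ℚ_[3]) := by push_cast; ring
  rw [h, norm_mul, norm_pow, nm3, nm_unit 22220 (by norm_num)]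
  norm_num

private lemma nm_div27 (m : ℤ) : ‖(((27 * m :ℤ)) : ℚ_[3])‖ ≤ (27:ℝ)⁻¹ := by
  have h : (((27*m:ℤ)) : ℚ_[3]) = (3:ℚ_[3])^3 * ((m:ℤ):ℚ_[3]) := by push_cast; ring
  rw [h, norm_mul, norm_pow, nm3]
  calc ((3:ℝ)⁻¹)^3 * ‖((m:ℤ):ℚ_[3])‖ ≤ ((3:ℝ)⁻¹)^3 * 1 :=
        mul_le_mul_of_nonneg_left (Padic.norm_int_le_one _) (by positivity)
    _ = (27:ℝ)⁻¹ := by norm_num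

private lemma nm_div3 (m : ℤ) : ‖(((3 * m :ℤ)) : ℚ_[3])‖ ≤ (3:ℝ)⁻¹ := by
  have h : (((3*m:ℤ)) : ℚ_[3]) = (3:ℚ_[3]) * ((m:ℤ):ℚ_[3]) := by push_cast; ring
  rw [h, norm_mul, nm3]
  calc (3:ℝ)⁻¹ * ‖((m:ℤ):ℚ_[3])‖ ≤ (3:ℝ)⁻¹ * 1 :=
        mul_le_mul_of_nonneg_left (Padic.norm_int_le_one _) (by positivity)
    _ = (3:ℝ)⁻¹ := by norm_num

private lemma ultra_lt {a b : ℚ_[3]} {c : ℝ} (ha : ‖a‖ < c) (hb : ‖b‖ < c) : ‖a + b‖ < c :=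
  lt_of_le_of_lt (Padic.nonarchimedean a b) (max_lt ha hb)

private lemma steps (t : ℝ) (ht : 3 ≤ t) :
    27⁻¹ * t^5 < 27⁻¹*t^6 ∧ 27⁻¹*t^4 < 27⁻¹*t^6 ∧ 3⁻¹*t^3 < 27⁻¹*t^6 ∧
    t^2 < 27⁻¹*t^6 ∧ t < 27⁻¹*t^6 ∧ 1 < 27⁻¹*t^6 := by
  have h0 : (0:ℝ) < t := by linarith
  have h2 : (9:ℝ) ≤ t^2 := by nlinarith
  have h3 : (27:ℝ) ≤ t^3 := by nlinarith
  have h4 : (81:ℝ) ≤ t^4 := by nlinarith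
  have h5 : (243:ℝ) ≤ t^5 := by nlinarith
  have h6 : (729:ℝ) ≤ t^6 := by nlinarith
  refine ⟨by nlinarith [pow_pos h0 5], by nlinarith [pow_pos h0 4], by nlinarith [pow_pos h0 3],
    by nlinarith [pow_pos h0 2], by nlinarith, by nlinarith⟩

/-- The reduction of the curve mod 3 has no points: the right-hand side is `≡ 2 (mod 3)`. -/
private lemma zmod3_check : ∀ a b : ZMod 3, b^2 ≠ -599940 * a^6 - 627237*a^5 - 273132*a^4
    - 63276*a^3 - 8208*a^2 - 564*a - 16 := by decide

/-- No points with `‖X‖ ≤ 1`: reduce mod 3. -/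
private lemma caseA (X Y : ℚ_[3]) (hX : ‖X‖ ≤ 1)
    (h : Y ^ 2 = -599940 * X ^ 6 - 627237 * X ^ 5 - 273132 * X ^ 4
        - 63276 * X ^ 3 - 8208 * X ^ 2 - 564 * X - 16) : False := by
  set x : ℤ_[3] := ⟨X, hX⟩ with hx
  have hXx : (x : ℚ_[3]) = X := rfl
  set z : ℤ_[3] := -599940 * x^6 - 627237*x^5 - 273132*x^4 - 63276*x^3
      - 8208*x^2 - 564*x - 16 with hzdef
  have hzc : ((z : ℤ_[3]) : ℚ_[3]) = Y^2 := by
    rw [h, hzdef]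
    push_cast
    norm_cast
  have hY : ‖Y‖ ≤ 1 := by
    have h2 : ‖Y‖^2 ≤ 1 := by
      rw [← norm_pow, ← hzc, PadicInt.padic_norm_e_of_padicInt]
      exact PadicInt.norm_le_one z
    exact (pow_le_one_iff_of_nonneg (norm_nonneg Y) two_ne_zero).mp h2
  set y : ℤ_[3] := ⟨Y, hY⟩ with hy
  have hq : ((y : ℤ_[3]) : ℚ_[3])^2 = ((z : ℤ_[3]) : ℚ_[3]) := hzc.symm
  have hyz : y^2 = z := Subtype.coe_injective (by exact_mod_cast hq)
  have := congrArg (PadicInt.toZMod (p := 3)) hyz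
  rw [hzdef] at this
  simp only [map_pow, map_mul, map_sub, map_neg, map_ofNat] at this
  exact zmod3_check (PadicInt.toZMod x) (PadicInt.toZMod y) this

/-- No points with `‖X‖ > 1`: the right-hand side has odd valuation `3 + 6·v(X)`. -/
private lemma caseB (X Y : ℚ_[3]) (hX : 1 < ‖X‖)
    (h : Y ^ 2 = -599940 * X ^ 6 - 627237 * X ^ 5 - 273132 * X ^ 4
        - 63276 * X ^ 3 - 8208 * X ^ 2 - 564 * X - 16) : False := by
  have hX0 : X ≠ 0 := by rintro rfl; simp at hX; linarith
  have hnX : ‖X‖ = (3:ℝ)^(-X.valuation) := by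
    have := Padic.norm_eq_zpow_neg_valuation hX0
    simpa using this
  have hv : X.valuation ≤ -1 := by
    by_contra hv
    push_neg at hv
    have : (3:ℝ)^(-X.valuation) ≤ 1 := zpow_le_one_of_nonpos₀ (by norm_num) (by omega)
    rw [← hnX] at this; linarith
  have ht3 : (3:ℝ) ≤ ‖X‖ := by
    rw [hnX]
    calc (3:ℝ) = 3^(1:ℤ) := by norm_num
      _ ≤ 3^(-X.valuation) := zpow_le_zpow_right₀ (by norm_num) (by omega)
  have ht0 : (0:ℝ) < ‖X‖ := by linarith
  obtain ⟨s5, s4, s3, s2, s1, s0⟩ := steps ‖X‖ ht3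
  set B : ℝ := (27:ℝ)⁻¹ * ‖X‖^6 with hB
  have h5 : ‖(-(((627237:ℤ):ℚ_[3]) * X^5))‖ < B := by
    rw [norm_neg, norm_mul, norm_pow, show ((627237:ℤ):ℚ_[3]) = (((27*23231:ℤ)):ℚ_[3]) by norm_num]
    calc ‖((27*23231:ℤ):ℚ_[3])‖ * ‖X‖^5 ≤ 27⁻¹ * ‖X‖^5 :=
          mul_le_mul_of_nonneg_right (nm_div27 23231) (by positivity)
      _ < B := s5
  have h4 : ‖(-(((273132:ℤ):ℚ_[3]) * X^4))‖ < B := by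
    rw [norm_neg, norm_mul, norm_pow, show ((273132:ℤ):ℚ_[3]) = (((27*10116:ℤ)):ℚ_[3]) by norm_num]
    calc ‖((27*10116:ℤ):ℚ_[3])‖ * ‖X‖^4 ≤ 27⁻¹ * ‖X‖^4 :=
          mul_le_mul_of_nonneg_right (nm_div27 10116) (by positivity)
      _ < B := s4
  have h3 : ‖(-(((63276:ℤ):ℚ_[3]) * X^3))‖ < B := by
    rw [norm_neg, norm_mul, norm_pow, show ((63276:ℤ):ℚ_[3]) = (((3*21092:ℤ)):ℚ_[3]) by norm_num]
    calc ‖((3*21092:ℤ):ℚ_[3])‖ * ‖X‖^3 ≤ 3⁻¹ * ‖X‖^3 :=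
          mul_le_mul_of_nonneg_right (nm_div3 21092) (by positivity)
      _ < B := s3
  have h2 : ‖(-(((8208:ℤ):ℚ_[3]) * X^2))‖ < B := by
    rw [norm_neg, norm_mul, norm_pow]
    calc ‖((8208:ℤ):ℚ_[3])‖ * ‖X‖^2 ≤ 1 * ‖X‖^2 :=
          mul_le_mul_of_nonneg_right (Padic.norm_int_le_one _) (by positivity)
      _ = ‖X‖^2 := one_mul _
      _ < B := s2
  have h1 : ‖(-(((564:ℤ):ℚ_[3]) * X))‖ < B := by
    rw [norm_neg, norm_mul]
    calc ‖((564:ℤ):ℚ_[3])‖ * ‖X‖ ≤ 1 * ‖X‖ :=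
          mul_le_mul_of_nonneg_right (Padic.norm_int_le_one _) (by positivity)
      _ = ‖X‖ := one_mul _
      _ < B := s1
  have h0 : ‖(-((16:ℤ):ℚ_[3]))‖ < B := by
    rw [norm_neg]
    calc ‖((16:ℤ):ℚ_[3])‖ ≤ 1 := Padic.norm_int_le_one _
      _ < B := s0
  set R : ℚ_[3] := (-(((627237:ℤ):ℚ_[3]) * X^5)) + (-(((273132:ℤ):ℚ_[3]) * X^4))
      + (-(((63276:ℤ):ℚ_[3]) * X^3)) + (-(((8208:ℤ):ℚ_[3]) * X^2))
      + (-(((564:ℤ):ℚ_[3]) * X)) + (-((16:ℤ):ℚ_[3])) with hR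
  have hRB : ‖R‖ < B := ultra_lt (ultra_lt (ultra_lt (ultra_lt (ultra_lt h5 h4) h3) h2) h1) h0
  set T : ℚ_[3] := -(((599940:ℤ):ℚ_[3]) * X^6) with hT
  have hTB : ‖T‖ = B := by rw [hT, norm_neg, norm_mul, norm_pow, nm_599940]
  have hRT : ‖R‖ < ‖T‖ := by rw [hTB]; exact hRB
  have heq : Y^2 = T + R := by rw [h]; ring
  have hmax : ‖Y^2‖ = B := by
    rw [heq, Padic.add_eq_max_of_ne (ne_of_gt hRT), max_eq_left hRT.le]
    exact hTB
  have hY0 : Y ≠ 0 := by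
    rintro rfl
    rw [hB] at hmax
    simp at hmax
    exact hX0 hmax
  have hnY : ‖Y‖ = (3:ℝ)^(-Y.valuation) := by
    have := Padic.norm_eq_zpow_neg_valuation hY0
    simpa using this
  have key : (3:ℝ)^(-(2*Y.valuation)) = (3:ℝ)^(-(3 + 6*X.valuation)) := by
    have l : ‖Y^2‖ = (3:ℝ)^(-(2*Y.valuation)) := by
      rw [norm_pow, hnY, ← zpow_natCast ((3:ℝ)^(-Y.valuation)) 2, ← zpow_mul]
      ring_nf
    have r : B = (3:ℝ)^(-(3 + 6*X.valuation)) := by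
      rw [hB, hnX, ← zpow_natCast ((3:ℝ)^(-X.valuation)) 6, ← zpow_mul,
        show ((27:ℝ)⁻¹) = (3:ℝ)^(-3:ℤ) by norm_num,
        ← zpow_add₀ (by norm_num : (3:ℝ) ≠ 0)]
      ring_nf
    rw [← l, hmax, r]
  have := (zpow_right_inj₀ (by norm_num : (0:ℝ) < 3) (by norm_num)).mp key
  omega

/-- `-599940` has odd 3-adic valuation, hence is not a square in `ℚ₃`. -/
private lemma caseU (u : ℚ_[3]) (h : u^2 = -599940) : False := by
  have hn : ‖u‖^2 = (27:ℝ)⁻¹ := by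
    rw [← norm_pow, h, show (-599940 : ℚ_[3]) = -((599940:ℤ):ℚ_[3]) by push_cast; ring,
      norm_neg, nm_599940]
  have hu0 : u ≠ 0 := by rintro rfl; norm_num at hn
  have hnu : ‖u‖ = (3:ℝ)^(-u.valuation) := by simpa using Padic.norm_eq_zpow_neg_valuation hu0
  have key : (3:ℝ)^(-(2*u.valuation)) = (3:ℝ)^(-3:ℤ) := by
    calc (3:ℝ)^(-(2*u.valuation)) = ((3:ℝ)^(-u.valuation))^2 := by
          rw [← zpow_natCast ((3:ℝ)^(-u.valuation)) 2, ← zpow_mul]; ring_nf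
      _ = ‖u‖^2 := by rw [hnu]
      _ = (27:ℝ)⁻¹ := hn
      _ = (3:ℝ)^(-3:ℤ) := by norm_num
  have := (zpow_right_inj₀ (by norm_num : (0:ℝ) < 3) (by norm_num)).mp key
  omega

private lemma part1 : ¬ ∃ X Y : ℚ_[3], Y ^ 2 = -599940 * X ^ 6 - 627237 * X ^ 5
    - 273132 * X ^ 4 - 63276 * X ^ 3 - 8208 * X ^ 2 - 564 * X - 16 := by
  rintro ⟨X, Y, h⟩
  rcases le_or_gt ‖X‖ 1 with hX | hX
  · exact caseA X Y hX h
  · exact caseB X Y hX h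

/-- The hyperelliptic curve `C₂ : Y² = -599940X⁶ - ⋯ - 16` has no `ℚ₃`-points
(neither affine points nor points at infinity on the smooth model, the latter
existing precisely when the leading coefficient `-599940` is a square), and
hence no rational points. -/
theorem stmt_12 :
    (¬ ∃ X Y : ℚ_[3], Y ^ 2 = -599940 * X ^ 6 - 627237 * X ^ 5 - 273132 * X ^ 4
        - 63276 * X ^ 3 - 8208 * X ^ 2 - 564 * X - 16) ∧
    (¬ ∃ u : ℚ_[3], u ^ 2 = -599940) ∧
    (¬ ∃ X Y : ℚ, Y ^ 2 = -599940 * X ^ 6 - 627237 * X ^ 5 - 273132 * X ^ 4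
        - 63276 * X ^ 3 - 8208 * X ^ 2 - 564 * X - 16) ∧
    (¬ ∃ u : ℚ, u ^ 2 = -599940) := by
  refine ⟨part1, ?_, ?_, ?_⟩
  · rintro ⟨u, h⟩
    exact caseU u h
  · rintro ⟨X, Y, h⟩
    have hc := congrArg (fun q : ℚ => (q : ℚ_[3])) h
    push_cast at hc
    exact part1 ⟨(X : ℚ_[3]), (Y : ℚ_[3]), hc⟩
  · rintro ⟨u, h⟩
    have hc := congrArg (fun q : ℚ => (q : ℚ_[3])) h
    push_cast at hc
    exact caseU (u : ℚ_[3]) hc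
end

section
/- Over a field k of characteristic not 2, with A² = B₁ + B₂ and both curves nonsingular, the elliptic curve E : y² = x³ + 2Ax² + B₁x is 2-isogenous to the curve Ẽ : y² = x³ - 4Ax² + 4B₂x, which is the quadratic twist by -2 of E' : y² = x³ + 2Ax² + B₂x. -/
/-- Over a field of characteristic not 2, with `A² = B₁ + B₂`, the curve
`E : y² = x³ + 2Ax² + B₁x` is 2-isogenous to `Ẽ : y² = x³ - 4Ax² + 4B₂x` via the
standard 2-isogeny `(x, y) ↦ (y²/x², y(B₁ - x²)/x²)` through the 2-torsion point
`(0,0)`, and `Ẽ` is the quadratic twist by `-2` of `E' : y² = x³ + 2Ax² + B₂x`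
(the twist being `(x, y) ↦ (r²x, r³y)` for any square root `r` of `-2`). -/
theorem stmt_16 (k : Type*) [Field k] (h2 : (2 : k) ≠ 0)
    (A B₁ B₂ : k) (hA : A ^ 2 = B₁ + B₂)
    (hE : 64 * B₁ ^ 2 * B₂ ≠ 0) (hE' : 64 * B₂ ^ 2 * B₁ ≠ 0) :
    (∀ x y : k, x ≠ 0 → y ^ 2 = x ^ 3 + 2 * A * x ^ 2 + B₁ * x →
      (y * (B₁ - x ^ 2) / x ^ 2) ^ 2 =
        (y ^ 2 / x ^ 2) ^ 3 - 4 * A * (y ^ 2 / x ^ 2) ^ 2 +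
          4 * B₂ * (y ^ 2 / x ^ 2)) ∧
    (∀ x y r : k, r ^ 2 = -2 → y ^ 2 = x ^ 3 + 2 * A * x ^ 2 + B₂ * x →
      (r ^ 3 * y) ^ 2 =
        (r ^ 2 * x) ^ 3 - 4 * A * (r ^ 2 * x) ^ 2 + 4 * B₂ * (r ^ 2 * x)) := by
  constructor
  · intro x y hx hy
    have hB₂ : B₂ = A ^ 2 - B₁ := by linear_combination -hA
    subst hB₂
    have h1 : (y * (B₁ - x ^ 2) / x ^ 2) ^ 2 = y ^ 2 * (B₁ - x ^ 2) ^ 2 / x ^ 4 := by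
      ring
    rw [h1, hy]
    field_simp
    ring
  · intro x y r hr hy
    have : (r ^ 3 * y) ^ 2 = (r^2)^3 * y^2 := by ring
    rw [this, hr, hy]
    ring
end

section
/- If a, b, c are coprime integers with c^l = 3a^4 + 12a^2b^2 + 2b^4 for some l > 1 and gcd(a,b)=1, then c > 1 and there exists a prime p > 5 dividing c. -/
theorem stmt_17 (a b c : ℤ) (l : ℕ) (hl : 1 < l) (hab : Int.gcd a b = 1)
    (h : c ^ l = 3 * a ^ 4 + 12 * a ^ 2 * b ^ 2 + 2 * b ^ 4) :
    1 < c ∧ ∃ p : ℕ, p.Prime ∧ 5 < p ∧ (p : ℤ) ∣ c := by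
  have hco : IsCoprime a b := Int.isCoprime_iff_gcd_eq_one.mpr hab
  have hnotboth : ∀ d : ℤ, Prime d → d ∣ a → d ∣ b → False := by
    intro d hd hda hdb
    exact hd.not_unit (hco.isUnit_of_dvd' hda hdb)
  -- rule out 3 ∣ b
  have h3b : ¬ (3:ℤ) ∣ b := by
    intro h3b
    have h3a : ¬ (3:ℤ) ∣ a := fun h3a => hnotboth 3 Int.prime_three h3a h3b
    have h9 : (c : ZMod 9) ^ l =
        3 * (a:ZMod 9)^4 + 12 * (a:ZMod 9)^2 * (b:ZMod 9)^2 + 2*(b:ZMod 9)^4 := by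
      have := congrArg (fun x : ℤ => (x : ZMod 9)) h
      push_cast at this
      simpa using this
    have hb9 : (b : ZMod 9)^2 = 0 := by
      obtain ⟨k, rfl⟩ := h3b
      have h' : ((3*k : ℤ) : ZMod 9)^2 = 9 * (k : ZMod 9)^2 := by push_cast; ring
      rw [h', show (9 : ZMod 9) = 0 from by decide, zero_mul]
    have h9' : (c : ZMod 9) ^ l = 3 * (a:ZMod 9)^4 := by
      rw [h9, show ((b:ZMod 9))^4 = ((b:ZMod 9)^2)^2 by ring, hb9]
      ring
    have hc3 : ((c : ZMod 3)) ^ l = 0 := by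
      have := congrArg (ZMod.castHom (show (3:ℕ) ∣ 9 by norm_num) (ZMod 3)) h9'
      simp only [map_pow, map_mul, map_intCast, map_ofNat] at this
      rw [this, show (3 : ZMod 3) = 0 from by decide, zero_mul]
    have h3cl : (3:ℤ) ∣ c ^ l := by
      have : ((c ^ l : ℤ) : ZMod 3) = 0 := by push_cast; exact hc3
      exact (ZMod.intCast_zmod_eq_zero_iff_dvd _ 3).mp this
    have h3c : (3:ℤ) ∣ c := Int.prime_three.dvd_of_dvd_pow h3cl
    have h9cl : (9:ℤ) ∣ c ^ l := by
      obtain ⟨d, rfl⟩ := h3c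
      have h2l : (9:ℤ) ∣ (3*d)^2 := ⟨d^2, by ring⟩
      exact dvd_trans h2l (pow_dvd_pow _ hl)
    have h90 : ((c : ZMod 9)) ^ l = 0 := by
      have : ((c ^ l : ℤ) : ZMod 9) = 0 := (ZMod.intCast_zmod_eq_zero_iff_dvd _ 9).mpr h9cl
      push_cast at this
      exact this
    have ha0 : (ZMod.castHom (show (3:ℕ) ∣ 9 by norm_num) (ZMod 3)) (a : ZMod 9) = 0 := by
      have key : ∀ w : ZMod 9, 3 * w^4 = 0 →
          (ZMod.castHom (show (3:ℕ) ∣ 9 by norm_num) (ZMod 3)) w = 0 := by decide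
      exact key _ (by rw [← h9', h90])
    have : ((a : ℤ) : ZMod 3) = 0 := by simpa using ha0
    exact h3a ((ZMod.intCast_zmod_eq_zero_iff_dvd _ 3).mp this)
  -- consequences mod 3 : 3 ∤ c and l odd
  have hb3 : ((b : ℤ) : ZMod 3) ≠ 0 := fun h0 =>
    h3b ((ZMod.intCast_zmod_eq_zero_iff_dvd _ 3).mp h0)
  have hc3pow : (c : ZMod 3) ^ l = 2 := by
    have h3 : (c : ZMod 3) ^ l =
        3 * (a:ZMod 3)^4 + 12 * (a:ZMod 3)^2 * (b:ZMod 3)^2 + 2*(b:ZMod 3)^4 := by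
      have := congrArg (fun x : ℤ => (x : ZMod 3)) h
      push_cast at this
      simpa using this
    have hb4 : (b : ZMod 3)^4 = 1 := by
      have key : ∀ w : ZMod 3, w ≠ 0 → w^4 = 1 := by decide
      exact key _ hb3
    rw [h3, hb4, show (3 : ZMod 3) = 0 from by decide, show (12 : ZMod 3) = 0 from by decide]
    ring
  have h3c : ¬ (3:ℤ) ∣ c := by
    intro h3c
    have h0 : ((c : ℤ) : ZMod 3) = 0 := (ZMod.intCast_zmod_eq_zero_iff_dvd _ 3).mpr h3c
    rw [h0, zero_pow (by omega : l ≠ 0)] at hc3pow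
    exact absurd hc3pow (by decide)
  have hlodd : Odd l := by
    rcases Nat.even_or_odd l with he | ho
    · exfalso
      obtain ⟨m, rfl⟩ := he
      rw [show m + m = m * 2 from by ring, pow_mul] at hc3pow
      have key : ∀ x : ZMod 3, x^2 ≠ 2 := by decide
      exact key _ hc3pow
    · exact ho
  -- rule out 2 ∣ a
  have h2a : ¬ (2:ℤ) ∣ a := by
    intro h2a
    have h2b : ¬ (2:ℤ) ∣ b := fun h2b => hnotboth 2 Int.prime_two h2a h2b
    have hb2 : ((b : ℤ) : ZMod 2) ≠ 0 := fun h0 =>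
      h2b ((ZMod.intCast_zmod_eq_zero_iff_dvd _ 2).mp h0)
    have h4 : (c : ZMod 4) ^ l =
        3 * (a:ZMod 4)^4 + 12 * (a:ZMod 4)^2 * (b:ZMod 4)^2 + 2*(b:ZMod 4)^4 := by
      have := congrArg (fun x : ℤ => (x : ZMod 4)) h
      push_cast at this
      simpa using this
    have ha4 : (a : ZMod 4)^2 = 0 := by
      obtain ⟨k, rfl⟩ := h2a
      have h' : ((2*k : ℤ) : ZMod 4)^2 = 4 * (k : ZMod 4)^2 := by push_cast; ring
      rw [h', show (4 : ZMod 4) = 0 from by decide, zero_mul]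
    have hb4 : (b : ZMod 4)^4 = 1 := by
      have hb2' : (ZMod.castHom (show (2:ℕ) ∣ 4 by norm_num) (ZMod 2)) (b : ZMod 4) ≠ 0 := by
        simpa using hb2
      have key : ∀ w : ZMod 4,
          (ZMod.castHom (show (2:ℕ) ∣ 4 by norm_num) (ZMod 2)) w ≠ 0 → w^4 = 1 := by decide
      exact key _ hb2'
    have h4' : (c : ZMod 4) ^ l = 2 := by
      rw [h4, show ((a:ZMod 4))^4 = ((a:ZMod 4)^2)^2 by ring, ha4, hb4]
      norm_num
    have hc2 : ((c : ZMod 2)) ^ l = 0 := by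
      have := congrArg (ZMod.castHom (show (2:ℕ) ∣ 4 by norm_num) (ZMod 2)) h4'
      simp only [map_pow, map_intCast, map_ofNat] at this
      rw [this]; decide
    have h2cl : (2:ℤ) ∣ c ^ l := by
      have : ((c ^ l : ℤ) : ZMod 2) = 0 := by push_cast; exact hc2
      exact (ZMod.intCast_zmod_eq_zero_iff_dvd _ 2).mp this
    have h2c : (2:ℤ) ∣ c := Int.prime_two.dvd_of_dvd_pow h2cl
    have h4cl : (4:ℤ) ∣ c ^ l := by
      obtain ⟨d, rfl⟩ := h2c
      have h2l : (4:ℤ) ∣ (2*d)^2 := ⟨d^2, by ring⟩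
      exact dvd_trans h2l (pow_dvd_pow _ hl)
    have h40 : ((c : ZMod 4)) ^ l = 0 := by
      have : ((c ^ l : ℤ) : ZMod 4) = 0 := (ZMod.intCast_zmod_eq_zero_iff_dvd _ 4).mpr h4cl
      push_cast at this
      exact this
    rw [h4'] at h40
    exact absurd h40 (by decide)
  -- 2 ∤ c
  have ha2 : ((a : ℤ) : ZMod 2) ≠ 0 := fun h0 =>
    h2a ((ZMod.intCast_zmod_eq_zero_iff_dvd _ 2).mp h0)
  have h2c : ¬ (2:ℤ) ∣ c := by
    intro h2c
    have h2 : (c : ZMod 2) ^ l =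
        3 * (a:ZMod 2)^4 + 12 * (a:ZMod 2)^2 * (b:ZMod 2)^2 + 2*(b:ZMod 2)^4 := by
      have := congrArg (fun x : ℤ => (x : ZMod 2)) h
      push_cast at this
      simpa using this
    have h0 : ((c : ℤ) : ZMod 2) = 0 := (ZMod.intCast_zmod_eq_zero_iff_dvd _ 2).mpr h2c
    rw [h0, zero_pow (by omega : l ≠ 0)] at h2
    have ha1 : (a : ZMod 2) = 1 := by
      have key : ∀ w : ZMod 2, w ≠ 0 → w = 1 := by decide
      exact key _ ha2
    rw [ha1] at h2
    have : (0 : ZMod 2) = 1 := by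
      rw [h2, show (3 : ZMod 2) = 1 from by decide, show (12 : ZMod 2) = 0 from by decide,
        show (2 : ZMod 2) = 0 from by decide]
      ring
    exact absurd this (by decide)
  -- 5 ∤ c
  have h5c : ¬ (5:ℤ) ∣ c := by
    intro h5c
    have h5 : (c : ZMod 5) ^ l =
        3 * (a:ZMod 5)^4 + 12 * (a:ZMod 5)^2 * (b:ZMod 5)^2 + 2*(b:ZMod 5)^4 := by
      have := congrArg (fun x : ℤ => (x : ZMod 5)) h
      push_cast at this
      simpa using this
    have h0 : ((c : ℤ) : ZMod 5) = 0 := (ZMod.intCast_zmod_eq_zero_iff_dvd _ 5).mpr h5c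
    rw [h0, zero_pow (by omega : l ≠ 0)] at h5
    have key : ∀ u v : ZMod 5,
        (0 : ZMod 5) = 3 * u^4 + 12 * u^2 * v^2 + 2*v^4 → u = 0 ∧ v = 0 := by decide
    obtain ⟨hu, hv⟩ := key _ _ h5
    exact hnotboth 5 (by norm_num) ((ZMod.intCast_zmod_eq_zero_iff_dvd _ 5).mp hu)
      ((ZMod.intCast_zmod_eq_zero_iff_dvd _ 5).mp hv)
  -- positivity
  have ha0 : a ≠ 0 := fun h0 => h2a (h0 ▸ dvd_zero 2)
  have ha1 : 1 ≤ a^2 := by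
    rcases lt_or_gt_of_ne ha0 with h' | h' <;> nlinarith
  have hR : 3 ≤ 3 * a ^ 4 + 12 * a ^ 2 * b ^ 2 + 2 * b ^ 4 := by
    nlinarith [sq_nonneg (a*b), sq_nonneg (b^2), sq_nonneg (a^2 - 1)]
  have hclpos : 0 < c ^ l := by rw [h]; linarith
  have hcpos : 0 < c := hlodd.pow_pos_iff.mp hclpos
  have hc1 : c ≠ 1 := by
    intro h1
    rw [h1, one_pow] at hclpos h
    omega
  have hc : 1 < c := by omega
  refine ⟨hc, c.natAbs.minFac, Nat.minFac_prime (by omega : c.natAbs ≠ 1), ?_, ?_⟩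
  · by_contra hle
    push_neg at hle
    have hp := Nat.minFac_prime (show c.natAbs ≠ 1 by omega)
    have h2le := hp.two_le
    have hdvd : ((c.natAbs.minFac : ℤ)) ∣ c :=
      dvd_trans (Int.natCast_dvd_natCast.mpr (Nat.minFac_dvd _)) (Int.natAbs_dvd.mpr dvd_rfl)
    interval_cases hpf : c.natAbs.minFac
    · exact h2c (by exact_mod_cast hdvd)
    · exact h3c (by exact_mod_cast hdvd)
    · norm_num at hp
    · exact h5c (by exact_mod_cast hdvd)
  · exact dvd_trans (Int.natCast_dvd_natCast.mpr (Nat.minFac_dvd _)) (Int.natAbs_dvd.mpr dvd_rfl)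
end

section
/- The resultant of the polynomials (43 - 8√30)x² + (6 - √30) and x² + (2 + √30/3) in K = ℚ(√30), viewed as polynomials in x over K, is divisible only by primes of K of residue characteristic 2, 3, or 5. -/
/-! The Sylvester matrix of `a x² + b` and `c x² + d` has determinant `(a d - b c)²`. For the two
given polynomials `a d - b c = -(2/3)√30`, so the resultant is the rational number `40/3`, whose
norm `(40/3)^[K:ℚ]` only involves the primes dividing `40` and `3`. -/

theorem det_sylvester_even_quadratics {R : Type*} [CommRing R] (a b c d : R) :
    Matrix.det !![a, 0, b, 0; 0, a, 0, b; c, 0, d, 0; 0, c, 0, d] = (a * d - b * c) ^ 2 := by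
  simp [Matrix.det_succ_row_zero, Fin.sum_univ_succ, Fin.succAbove]
  ring

theorem Rat.dvd_num_of_dvd_num_pow {p : ℤ} (hp : Prime p) {q : ℚ} {n : ℕ}
    (h : p ∣ (q ^ n).num) : p ∣ q.num :=
  hp.dvd_of_dvd_pow (Rat.num_pow q n ▸ h)

theorem Rat.dvd_den_of_dvd_den_pow {p : ℕ} (hp : p.Prime) {q : ℚ} {n : ℕ}
    (h : p ∣ (q ^ n).den) : p ∣ q.den :=
  hp.dvd_of_dvd_pow (Rat.den_pow q n ▸ h)

theorem Nat.Prime.eq_two_or_three_or_five_of_dvd_forty {p : ℕ} (hp : p.Prime) (h : p ∣ 40) :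
    p = 2 ∨ p = 3 ∨ p = 5 := by
  have := Nat.le_of_dvd (by norm_num) h
  interval_cases p <;> revert h hp <;> decide

theorem stmt_18_general (K : Type*) [Field K] [NumberField K] (s : K) (hs : s ^ 2 = 30) :
    ∀ p : ℕ, p.Prime →
      ((p : ℤ) ∣ (Algebra.norm ℚ
          (Matrix.det
            !![43 - 8 * s, 0, 6 - s, 0;
               0, 43 - 8 * s, 0, 6 - s;
               1, 0, 2 + s / 3, 0;
               0, 1, 0, 2 + s / 3])).num ∨
        p ∣ (Algebra.norm ℚ
          (Matrix.det
            !![43 - 8 * s, 0, 6 - s, 0;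
               0, 43 - 8 * s, 0, 6 - s;
               1, 0, 2 + s / 3, 0;
               0, 1, 0, 2 + s / 3])).den) →
      p = 2 ∨ p = 3 ∨ p = 5 := by
  have hres : (43 - 8 * s) * (2 + s / 3) - (6 - s) * 1 = -(2 / 3) * s := by
    linear_combination (-8 / 3 : K) * hs
  have hdet : Matrix.det
      !![43 - 8 * s, 0, 6 - s, 0;
         0, 43 - 8 * s, 0, 6 - s;
         1, 0, 2 + s / 3, 0;
         0, 1, 0, 2 + s / 3] = algebraMap ℚ K (40 / 3) := by
    rw [det_sylvester_even_quadratics, hres, map_div₀, map_ofNat, map_ofNat]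
    linear_combination (4 / 9 : K) * hs
  rw [hdet, Algebra.norm_algebraMap]
  rintro p hp (hnum | hden)
  · have h40 : (p : ℤ) ∣ (40 / 3 : ℚ).num :=
      Rat.dvd_num_of_dvd_num_pow (Nat.prime_iff_prime_int.mp hp) hnum
    rw [show (40 / 3 : ℚ).num = 40 by norm_num] at h40
    exact hp.eq_two_or_three_or_five_of_dvd_forty (by exact_mod_cast h40)
  · have h3 : p ∣ (40 / 3 : ℚ).den := Rat.dvd_den_of_dvd_den_pow hp hden
    rw [show (40 / 3 : ℚ).den = 3 by norm_num] at h3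
    exact Or.inr (Or.inl ((Nat.prime_dvd_prime_iff_eq hp Nat.prime_three).mp h3))

/-- The resultant (given by the determinant of the Sylvester matrix) of
`(43 - 8√30)x² + (6 - √30)` and `x² + (2 + √30/3)` over `K = ℚ(√30)` has norm
whose prime factors (of numerator and denominator) are among 2, 3, 5. -/
theorem stmt_18 (K : Type*) [Field K] [NumberField K] (s : K) (hs : s ^ 2 = 30)
    (hgen : ∀ x : K, ∃ a b : ℚ, x = (a : K) + (b : K) * s) :
    ∀ p : ℕ, p.Prime →
      ((p : ℤ) ∣ (Algebra.norm ℚ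
          (Matrix.det
            !![43 - 8 * s, 0, 6 - s, 0;
               0, 43 - 8 * s, 0, 6 - s;
               1, 0, 2 + s / 3, 0;
               0, 1, 0, 2 + s / 3])).num ∨
        p ∣ (Algebra.norm ℚ
          (Matrix.det
            !![43 - 8 * s, 0, 6 - s, 0;
               0, 43 - 8 * s, 0, 6 - s;
               1, 0, 2 + s / 3, 0;
               0, 1, 0, 2 + s / 3])).den) →
      p = 2 ∨ p = 3 ∨ p = 5 :=
  stmt_18_general K s hs
end
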